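/- arXiv:2310.13658 — 6 statements merged into one kernel-verified Lean document; each statement's English description precedes it below -/
import Mathlib

section
/- For every integer n ≥ 1 and each r ∈ {1, 2}, p(n - r) = (-1)^{r-1} · ∑_{λ} ∑_{k=r}^{n} μ(k) · m_k(λ), where the outer sum is over all partitions λ of n whose parts are all at least r, and m_k(λ) denotes the multiplicity of the part k in λ (equivalently, the sum is over all solutions of r·t_r + (r+1)·t_{r+1} + ⋯ + n·t_n = n in nonnegative integers t_r, …, t_n of μ(r)t_r + μ(r+1)t_{r+1} + ⋯ + μ(n)t_n). -/
/-!
Removing `j` copies of a part `k ≥ r` shows that the parts equal to `k`, counted over all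
partitions of `n` with parts `≥ r`, number `∑_{j ≥ 1} A_r(n - jk)`, where `A_r(m)` counts the
partitions of `m` with parts `≥ r`. Weighting by `μ(k)` and collecting the terms by `d = jk`, the
coefficient of `A_r(n - d)` is `∑_{k ∣ d, k ≥ r} μ(k)`. For `r = 1` this is `[d = 1]`, which leaves
`A_1(n - 1) = p(n - 1)`. For `r = 2` it is `-[d ≥ 2]`, and `∑_{m ≤ M} A_2(m) = p(M)` because a
partition of `M` is a partition without ones plus some ones.
-/

open Finset

/-- The number of partitions of `n`. -/
def p (n : ℕ) : ℕ := Fintype.card (Nat.Partition n)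

/-- The partition function extended by zero to negative integer arguments. -/
def pz (m : ℤ) : ℤ := if 0 ≤ m then (p m.toNat : ℤ) else 0

/-- `S r n k` : the total number of parts equal to `k` in all partitions of `n`
whose parts are all at least `r`. -/
def S (r n k : ℕ) : ℕ :=
  ∑ P : Nat.Partition n, if ∀ i ∈ P.parts, r ≤ i then P.parts.count k else 0

open ArithmeticFunction
open scoped ArithmeticFunction.Moebius

theorem Finset.sum_Icc_div_mul_eq_sum_filter_dvd {M : Type*} [AddCommMonoid M] (f : ℕ → M)
    (n k : ℕ) : ∑ j ∈ Icc 1 (n / k), f (j * k) = ∑ d ∈ Icc 1 n with k ∣ d, f d := by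
  rcases k.eq_zero_or_pos with rfl | hk
  · rw [Nat.div_zero, Icc_eq_empty_of_lt zero_lt_one, sum_empty, eq_comm]
    exact sum_eq_zero fun d hd => by simp only [mem_filter, mem_Icc, zero_dvd_iff] at hd; omega
  refine sum_nbij' (· * k) (· / k) ?_ ?_ ?_ ?_ (fun _ _ => rfl)
  · intro j hj
    simp only [mem_filter, mem_Icc] at hj ⊢
    exact ⟨⟨by nlinarith, (Nat.le_div_iff_mul_le hk).mp hj.2⟩, dvd_mul_left k j⟩
  · intro d hd
    simp only [mem_filter, mem_Icc] at hd ⊢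
    exact ⟨(Nat.one_le_div_iff hk).mpr (Nat.le_of_dvd (by omega) hd.2),
      Nat.div_le_div_right hd.1.2⟩
  · exact fun j _ => Nat.mul_div_cancel j hk
  · exact fun d hd => Nat.div_mul_cancel (mem_filter.mp hd).2

theorem ArithmeticFunction.sum_divisors_moebius (d : ℕ) :
    ∑ k ∈ d.divisors, μ k = if d = 1 then 1 else 0 := by
  rw [← coe_mul_zeta_apply, moebius_mul_coe_zeta, one_apply]

theorem ArithmeticFunction.sum_divisors_filter_two_le_moebius {d : ℕ} (hd : d ≠ 0) :
    ∑ k ∈ d.divisors with 2 ≤ k, μ k = if d = 1 then 0 else -1 := by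
  have : {k ∈ d.divisors | 2 ≤ k} = d.divisors.erase 1 := by
    ext k
    simp only [mem_filter, mem_erase]
    constructor
    · rintro ⟨hk, hk2⟩
      exact ⟨by omega, hk⟩
    · rintro ⟨hk1, hk⟩
      exact ⟨hk, by have := Nat.pos_of_mem_divisors hk; omega⟩
  rw [this, sum_erase_eq_sub (Nat.one_mem_divisors.mpr hd), sum_divisors_moebius,
    moebius_apply_one]
  split_ifs <;> rfl

theorem pz_natCast_sub (n r : ℕ) : pz (n - r) = if r ≤ n then (p (n - r) : ℤ) else 0 := by
  unfold pz
  split_ifs <;> first | omega | (congr; omega)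

namespace Nat.Partition

theorem count_mul_le {n : ℕ} (P : n.Partition) (k : ℕ) : P.parts.count k * k ≤ n := by
  obtain ⟨u, hu⟩ := Multiset.le_iff_exists_add.mp
    (Multiset.le_count_iff_replicate_le.mp (le_refl (P.parts.count k)))
  have := congrArg Multiset.sum hu
  rw [P.parts_sum, Multiset.sum_add, Multiset.sum_replicate, smul_eq_mul] at this
  omega

section Restricted

variable {q : ℕ → Prop} [DecidablePred q]

@[simp]
theorem mem_restricted {n : ℕ} {P : n.Partition} : P ∈ restricted n q ↔ ∀ i ∈ P.parts, q i := by
  simp [restricted]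

variable {k : ℕ}

theorem card_filter_le_count_restricted (hk : 0 < k) (hq : q k) (j m : ℕ) :
    #{P ∈ restricted (j * k + m) q | j ≤ P.parts.count k} = #(restricted m q) := by
  simp only [Multiset.le_count_iff_replicate_le]
  refine card_bij' (fun P hP => ⟨P.parts - .replicate j k, ?_, ?_⟩)
    (fun Q _ => ⟨Q.parts + .replicate j k, ?_, ?_⟩) ?_ ?_ ?_ ?_
  · exact fun hi => P.parts_pos (Multiset.mem_of_le tsub_le_self hi)
  · have := congrArg Multiset.sum (tsub_add_cancel_of_le (mem_filter.mp hP).2)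
    rw [Multiset.sum_add, Multiset.sum_replicate, smul_eq_mul, P.parts_sum] at this
    omega
  · intro i hi
    rcases Multiset.mem_add.mp hi with h | h
    · exact Q.parts_pos h
    · rwa [Multiset.eq_of_mem_replicate h]
  · rw [Multiset.sum_add, Multiset.sum_replicate, smul_eq_mul, Q.parts_sum, add_comm]
  · intro P hP
    simp only [mem_filter, mem_restricted] at hP ⊢
    exact fun i hi => hP.1 i (Multiset.mem_of_le tsub_le_self hi)
  · intro Q hQ
    simp only [mem_filter, mem_restricted] at hQ ⊢
    refine ⟨fun i hi => ?_, Multiset.le_add_left _ _⟩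
    rcases Multiset.mem_add.mp hi with h | h
    · exact hQ i h
    · rwa [Multiset.eq_of_mem_replicate h]
  · exact fun P hP => Nat.Partition.ext (tsub_add_cancel_of_le (mem_filter.mp hP).2)
  · exact fun Q _ => Nat.Partition.ext (add_tsub_cancel_right _ _)

theorem sum_count_restricted (hk : 0 < k) (hq : q k) (n : ℕ) :
    ∑ P ∈ restricted n q, P.parts.count k = ∑ d ∈ Icc 1 n with k ∣ d, #(restricted (n - d) q) := by
  calc ∑ P ∈ restricted n q, P.parts.count k
      = ∑ P ∈ restricted n q, #{j ∈ Icc 1 (n / k) | j ≤ P.parts.count k} := by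
        refine sum_congr rfl fun P _ => ?_
        have hcount := (Nat.le_div_iff_mul_le hk).mpr (P.count_mul_le k)
        have : {j ∈ Icc 1 (n / k) | j ≤ P.parts.count k} = Icc 1 (P.parts.count k) := by
          ext j
          simp only [mem_filter, mem_Icc]
          omega
        rw [this, Nat.card_Icc, Nat.add_sub_cancel]
    _ = ∑ j ∈ Icc 1 (n / k), #{P ∈ restricted n q | j ≤ P.parts.count k} :=
        sum_card_bipartiteAbove_eq_sum_card_bipartiteBelow _
    _ = ∑ j ∈ Icc 1 (n / k), #(restricted (n - j * k) q) := by
        refine sum_congr rfl fun j hj => ?_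
        obtain ⟨m, rfl⟩ :=
          Nat.exists_eq_add_of_le ((Nat.le_div_iff_mul_le hk).mp (mem_Icc.mp hj).2)
        rw [Nat.add_sub_cancel_left, card_filter_le_count_restricted hk hq]
    _ = ∑ d ∈ Icc 1 n with k ∣ d, #(restricted (n - d) q) :=
        sum_Icc_div_mul_eq_sum_filter_dvd (fun d => #(restricted (n - d) q)) n k

end Restricted

theorem sum_restricted_sum_moebius_mul_count {r : ℕ} (hr : 0 < r) (n : ℕ) :
    ∑ P ∈ restricted n (r ≤ ·), ∑ k ∈ Icc r n, μ k * (P.parts.count k : ℤ) =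
      ∑ d ∈ Icc 1 n, (∑ k ∈ d.divisors with r ≤ k, μ k) * #(restricted (n - d) (r ≤ ·)) := by
  calc ∑ P ∈ restricted n (r ≤ ·), ∑ k ∈ Icc r n, μ k * (P.parts.count k : ℤ)
      = ∑ k ∈ Icc r n, μ k * ∑ P ∈ restricted n (r ≤ ·), P.parts.count k := by
        rw [sum_comm]
        push_cast
        simp_rw [mul_sum]
    _ = ∑ k ∈ Icc r n, ∑ d ∈ Icc 1 n with k ∣ d, μ k * #(restricted (n - d) (r ≤ ·)) := by
        refine sum_congr rfl fun k hk => ?_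
        rw [sum_count_restricted (hr.trans_le (mem_Icc.mp hk).1) (mem_Icc.mp hk).1]
        push_cast
        rw [mul_sum]
    _ = ∑ d ∈ Icc 1 n, ∑ k ∈ d.divisors with r ≤ k, μ k * #(restricted (n - d) (r ≤ ·)) := by
        refine sum_comm' fun k d => ?_
        simp only [mem_Icc, mem_filter, Nat.mem_divisors]
        constructor
        · rintro ⟨⟨hrk, -⟩, ⟨hd1, hdn⟩, hkd⟩
          exact ⟨⟨⟨hkd, by omega⟩, hrk⟩, hd1, hdn⟩
        · rintro ⟨⟨⟨hkd, hd0⟩, hrk⟩, hd1, hdn⟩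
          exact ⟨⟨hrk, (Nat.le_of_dvd (by omega) hkd).trans hdn⟩, ⟨hd1, hdn⟩, hkd⟩
    _ = _ := by simp_rw [sum_mul]

theorem card_restricted_one_le (n : ℕ) : #(restricted n (1 ≤ ·)) = p n := by
  rw [eq_univ_of_forall fun P : n.Partition =>
    mem_restricted (q := (1 ≤ ·)).mpr fun _ hi => P.parts_pos hi, Finset.card_univ, p]

theorem card_restricted_two_le_add (m : ℕ) :
    #(restricted (m + 1) (2 ≤ ·)) + p m = p (m + 1) := by
  have hone : #{P : (m + 1).Partition | 1 ∈ P.parts} = p m := by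
    rw [← Fintype.card_subtype, Fintype.card_congr (partitionWithPartEquiv le_rfl (by omega))]
    rfl
  have hnoone : restricted (m + 1) (2 ≤ ·) = ({P | 1 ∉ P.parts} : Finset (m + 1).Partition) := by
    ext P
    simp only [mem_restricted, mem_filter, mem_univ, true_and]
    refine ⟨fun h h1 => by simpa using h 1 h1, fun h i hi => ?_⟩
    have := P.parts_pos hi
    have : i ≠ 1 := fun hi1 => h (hi1 ▸ hi)
    omega
  rw [hnoone, ← hone, add_comm, card_filter_add_card_filter_not]
  rfl

theorem sum_range_card_restricted_two_le (M : ℕ) :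
    ∑ m ∈ range (M + 1), #(restricted m (2 ≤ ·)) = p M := by
  induction M with
  | zero => rfl
  | succ M ih => rw [sum_range_succ, ih, add_comm, card_restricted_two_le_add]

theorem sum_Icc_card_restricted_two_le (M : ℕ) :
    ∑ d ∈ Icc 2 (M + 2), #(restricted (M + 2 - d) (2 ≤ ·)) = p M := by
  have := sum_Ico_reflect (fun m => #(restricted m (2 ≤ ·))) 2 (le_refl (M + 2 + 1))
  rwa [Ico_add_one_right_eq_Icc, Nat.sub_self, Nat.Ico_zero_eq_range, Nat.add_right_comm,
    Nat.add_sub_cancel, sum_range_card_restricted_two_le] at this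

theorem sum_restricted_one_le_sum_moebius_mul_count (n : ℕ) :
    ∑ P ∈ restricted n (1 ≤ ·), ∑ k ∈ Icc 1 n, μ k * (P.parts.count k : ℤ) =
      if 1 ≤ n then (p (n - 1) : ℤ) else 0 := by
  have hμ (d : ℕ) : ∑ k ∈ d.divisors with 1 ≤ k, μ k = if d = 1 then 1 else 0 := by
    rw [filter_true_of_mem (p := (1 ≤ ·)) fun k hk => Nat.pos_of_mem_divisors hk,
      sum_divisors_moebius]
  simp_rw [sum_restricted_sum_moebius_mul_count one_pos, hμ, ite_mul, one_mul, zero_mul,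
    sum_ite_eq']
  simp [card_restricted_one_le]

theorem sum_restricted_two_le_sum_moebius_mul_count (n : ℕ) :
    ∑ P ∈ restricted n (2 ≤ ·), ∑ k ∈ Icc 2 n, μ k * (P.parts.count k : ℤ) =
      -if 2 ≤ n then (p (n - 2) : ℤ) else 0 := by
  have hμ : ∀ d ∈ Icc 2 n, ∑ k ∈ d.divisors with 2 ≤ k, μ k = -1 := fun d hd => by
    rw [mem_Icc] at hd
    rw [sum_divisors_filter_two_le_moebius (by omega), if_neg (by omega)]
  rw [sum_restricted_sum_moebius_mul_count two_pos,
    ← sum_subset (Icc_subset_Icc_left one_le_two) fun d hd hd' => ?_]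
  · rw [sum_congr rfl fun d hd => by rw [hμ d hd, neg_one_mul], sum_neg_distrib]
    rcases lt_or_ge n 2 with hn | hn
    · simp [hn]
    · obtain ⟨M, rfl⟩ := Nat.exists_eq_add_of_le' hn
      rw [← Nat.cast_sum, sum_Icc_card_restricted_two_le]
      simp
  · obtain rfl : d = 1 := by simp only [mem_Icc] at hd hd'; omega
    simp [filter_singleton]

end Nat.Partition

open Nat.Partition in
theorem partition_shift_eq_sum_over_partitions_moebius_mult_general (n : ℕ)
    (r : ℕ) (hr : r = 1 ∨ r = 2) :
    pz ((n : ℤ) - (r : ℤ)) =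
      (-1) ^ (r - 1) *
        ∑ P : Nat.Partition n,
          (if ∀ i ∈ P.parts, r ≤ i then
            ∑ k ∈ Finset.Icc r n,
              ArithmeticFunction.moebius k * (P.parts.count k : ℤ)
          else 0) := by
  rw [← sum_filter, ← restricted, pz_natCast_sub]
  rcases hr with rfl | rfl
  · rw [sum_restricted_one_le_sum_moebius_mul_count]
    norm_num
  · rw [sum_restricted_two_le_sum_moebius_mul_count, Nat.add_one_sub_one, pow_one, neg_one_mul,
      neg_neg]

theorem partition_shift_eq_sum_over_partitions_moebius_mult (n : ℕ) (hn : 1 ≤ n)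
    (r : ℕ) (hr : r = 1 ∨ r = 2) :
    pz ((n : ℤ) - (r : ℤ)) =
      (-1) ^ (r - 1) *
        ∑ P : Nat.Partition n,
          (if ∀ i ∈ P.parts, r ≤ i then
            ∑ k ∈ Finset.Icc r n,
              ArithmeticFunction.moebius k * (P.parts.count k : ℤ)
          else 0) :=
  partition_shift_eq_sum_over_partitions_moebius_mult_general n r hr
end

section
/- For every integer n ≥ 0, the number of partitions of n with no parts equal to 1 equals -∑_{k=3}^{n+3} S^{(3)}_{n+3,k} · μ(k); equivalently, p(n) - p(n-1) = -∑_{k=3}^{n+3} S^{(3)}_{n+3,k} · μ(k), where p(m) = 0 for m < 0. -/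
open Finset

/-!
Write `pAtLeast r n` for the number of partitions of `n` into parts `≥ r`. Removing one part `k`
gives `S r n k = S r (n - k) k + pAtLeast r (n - k)`, so `S r N k` is the sum of
`pAtLeast r (N - m)` over the multiples `0 < m ≤ N` of `k`. Weighting by `μ k` and summing over
`3 ≤ k ≤ N` turns the sum into `∑ m, pAtLeast 3 (N - m) * ∑_{d ∣ m, d ≥ 3} μ d`, and since
`∑_{d ∣ m} μ d = [m = 1]`, the inner sum is `-1` for odd `m ≥ 3` and `0` otherwise. For
`N = n + 3` what remains is `-∑ j, pAtLeast 3 (n - 2 j)`, which counts the partitions of `n`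
without ones by their number of twos; deleting a part `1` shows that these are
`p n - p (n - 1)` many.
-/

variable {M : Type*} [AddCommMonoid M]

theorem Nat.Partition.sum_restricted_filter_mem {n k : ℕ} (hk : 1 ≤ k) (hkn : k ≤ n)
    {q : ℕ → Prop} [DecidablePred q] (hq : q k) (f : Multiset ℕ → M) :
    ∑ P ∈ restricted n q with k ∈ P.parts, f P.parts =
      ∑ P ∈ restricted (n - k) q, f (k ::ₘ P.parts) := by
  rw [restricted, Finset.filter_comm, Finset.sum_filter,
    Finset.sum_subtype _ (p := fun P : n.Partition => k ∈ P.parts) (by simp),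
    restricted, Finset.sum_filter]
  exact (Fintype.sum_equiv (partitionWithPartEquiv hk hkn).symm _ _ fun P => by simp [hq]).symm

theorem Nat.Partition.card_restricted_filter_mem {n k : ℕ} (hk : 1 ≤ k) (hkn : k ≤ n)
    {q : ℕ → Prop} [DecidablePred q] (hq : q k) :
    #{P ∈ restricted n q | k ∈ P.parts} = #(restricted (n - k) q) := by
  rw [card_eq_sum_ones, card_eq_sum_ones]
  exact sum_restricted_filter_mem hk hkn hq fun _ => 1

def pAtLeast (r n : ℕ) : ℕ := #(Nat.Partition.restricted n (r ≤ ·))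

open Nat.Partition

theorem pAtLeast_one (n : ℕ) : pAtLeast 1 n = p n := by
  rw [pAtLeast, p, ← card_univ]
  congr 1
  exact filter_true_of_mem fun P _ _ hi => P.parts_pos hi

theorem pAtLeast_succ_of_lt {r n : ℕ} (h : n < r) : pAtLeast (r + 1) n = pAtLeast r n := by
  unfold pAtLeast restricted
  congr 1
  refine filter_congr fun P _ => forall₂_congr fun i hi => ?_
  have := le_of_mem_parts hi
  omega

theorem pAtLeast_eq_pAtLeast_succ_add {r n : ℕ} (hr : 1 ≤ r) (hrn : r ≤ n) :
    pAtLeast r n = pAtLeast (r + 1) n + pAtLeast r (n - r) := by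
  have hfree : {P ∈ restricted n (r ≤ ·) | r ∉ P.parts} = restricted n (r + 1 ≤ ·) := by
    unfold restricted
    rw [Finset.filter_filter]
    refine filter_congr fun P _ => ⟨fun ⟨hge, hnot⟩ i hi => ?_, fun h => ⟨?_, ?_⟩⟩
    · exact lt_of_le_of_ne (hge i hi) (ne_of_mem_of_not_mem hi hnot).symm
    · exact fun i hi => (h i hi).trans' (Nat.le_succ r)
    · exact fun hmem => Nat.not_succ_le_self r (h r hmem)
  rw [pAtLeast, ← card_filter_add_card_filter_not (fun P : n.Partition => r ∈ P.parts),
    card_restricted_filter_mem hr hrn le_rfl, hfree, add_comm, pAtLeast, pAtLeast]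

theorem pAtLeast_eq_sum_range {r : ℕ} (hr : 1 ≤ r) (n : ℕ) :
    pAtLeast r n = ∑ j ∈ range (n / r + 1), pAtLeast (r + 1) (n - j * r) := by
  induction n using Nat.strong_induction_on with
  | _ n ih =>
    rcases lt_or_ge n r with hnr | hrn
    · rw [Nat.div_eq_of_lt hnr, zero_add, sum_range_one, zero_mul, Nat.sub_zero,
        pAtLeast_succ_of_lt hnr]
    · rw [pAtLeast_eq_pAtLeast_succ_add hr hrn, ih (n - r) (by omega), Nat.div_eq_sub_div hr hrn,
        sum_range_succ' _ ((n - r) / r + 1), add_comm]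
      congr 1
      · simp [Nat.sub_sub, add_mul, add_comm]
      · simp

theorem S_eq_sum_restricted (r n k : ℕ) :
    S r n k = ∑ P ∈ restricted n (r ≤ ·), P.parts.count k := by
  rw [S, restricted, sum_filter]

theorem S_eq_S_sub_add {r n k : ℕ} (hr : 1 ≤ r) (hrk : r ≤ k) (hkn : k ≤ n) :
    S r n k = S r (n - k) k + pAtLeast r (n - k) := by
  have hk : 1 ≤ k := hr.trans hrk
  have hnotMem : ∑ P ∈ restricted n (r ≤ ·) with k ∉ P.parts, P.parts.count k = 0 :=
    sum_eq_zero fun P hP => Multiset.count_eq_zero.2 (mem_filter.1 hP).2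
  rw [S_eq_sum_restricted, ← sum_filter_add_sum_filter_not _ (fun P : n.Partition => k ∈ P.parts),
    hnotMem, add_zero, sum_restricted_filter_mem hk hkn hrk, S_eq_sum_restricted, pAtLeast,
    card_eq_sum_ones, ← sum_add_distrib]
  simp

theorem S_eq_sum_range {r k : ℕ} (hr : 1 ≤ r) (hrk : r ≤ k) (n : ℕ) :
    S r n k = ∑ j ∈ range (n / k), pAtLeast r (n - (j + 1) * k) := by
  have hk : 0 < k := hr.trans hrk
  induction n using Nat.strong_induction_on with
  | _ n ih =>
    rcases lt_or_ge n k with hnk | hkn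
    · rw [Nat.div_eq_of_lt hnk, sum_range_zero, S_eq_sum_restricted]
      exact sum_eq_zero fun P _ =>
        Multiset.count_eq_zero.2 fun h => absurd (le_of_mem_parts h) hnk.not_ge
    · rw [S_eq_S_sub_add hr hrk hkn, ih (n - k) (by omega), Nat.div_eq_sub_div hk hkn,
        sum_range_succ']
      congr 1
      · simp [Nat.sub_sub, add_mul, add_comm]
      · simp

theorem sum_range_div_eq_sum_filter_dvd {k : ℕ} (hk : 0 < k) (n : ℕ) (f : ℕ → M) :
    ∑ j ∈ range (n / k), f ((j + 1) * k) = ∑ m ∈ Ioc 0 n with k ∣ m, f m := by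
  refine sum_nbij' (fun j => (j + 1) * k) (fun m => m / k - 1) (fun j hj => ?_) (fun m hm => ?_)
    (fun j _ => ?_) (fun m hm => ?_) fun _ _ => rfl
  · rw [mem_range] at hj
    rw [mem_filter, mem_Ioc]
    exact ⟨⟨Nat.mul_pos j.succ_pos hk, (Nat.le_div_iff_mul_le hk).1 hj⟩, dvd_mul_left k _⟩
  · rw [mem_filter, mem_Ioc] at hm
    have := Nat.div_le_div_right (c := k) hm.1.2
    have := Nat.div_pos (Nat.le_of_dvd hm.1.1 hm.2) hk
    rw [mem_range]
    omega
  · simp [Nat.mul_div_cancel _ hk]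
  · rw [mem_filter, mem_Ioc] at hm
    rw [Nat.sub_add_cancel (Nat.div_pos (Nat.le_of_dvd hm.1.1 hm.2) hk), Nat.div_mul_cancel hm.2]

open ArithmeticFunction ArithmeticFunction.Moebius

theorem sum_divisors_moebius_eq_ite {m : ℕ} :
    ∑ d ∈ m.divisors, (μ d : ℤ) = if m = 1 then 1 else 0 := by
  rw [← coe_mul_zeta_apply, moebius_mul_coe_zeta, one_apply]

theorem sum_divisors_filter_three_le_moebius {m : ℕ} (hm : m ≠ 0) :
    ∑ d ∈ m.divisors with 3 ≤ d, (μ d : ℤ) = if m ≠ 1 ∧ ¬ 2 ∣ m then -1 else 0 := by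
  have hsmall : ∑ d ∈ m.divisors with ¬ 3 ≤ d, (μ d : ℤ) = 1 + if 2 ∣ m then -1 else 0 := by
    rw [show {d ∈ m.divisors | ¬ 3 ≤ d} = {d ∈ range 3 | d ∣ m} by ext d; simp [hm]; omega,
      sum_filter]
    simp [sum_range_succ, moebius_apply_prime Nat.prime_two]
  have htotal := sum_filter_add_sum_filter_not m.divisors (3 ≤ ·) (fun d => (μ d : ℤ))
  rw [hsmall, sum_divisors_moebius_eq_ite] at htotal
  split_ifs at htotal ⊢ <;> omega

theorem sum_Icc_three_sum_filter_dvd_mul_moebius (N : ℕ) (F : ℕ → ℤ) :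
    ∑ k ∈ Icc 3 N, (∑ m ∈ Ioc 0 N with k ∣ m, F m) * μ k =
      -∑ m ∈ Ioc 0 N with m ≠ 1 ∧ ¬ 2 ∣ m, F m := by
  have hswap : ∑ k ∈ Icc 3 N, ∑ m ∈ Ioc 0 N with k ∣ m, μ k * F m =
      ∑ m ∈ Ioc 0 N, ∑ k ∈ m.divisors with 3 ≤ k, μ k * F m := by
    refine sum_comm' fun k m => ?_
    simp only [mem_Icc, mem_filter, mem_Ioc, Nat.mem_divisors]
    constructor
    · rintro ⟨⟨h3, -⟩, ⟨h0, hN⟩, hkm⟩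
      exact ⟨⟨⟨hkm, h0.ne'⟩, h3⟩, h0, hN⟩
    · rintro ⟨⟨⟨hkm, -⟩, h3⟩, h0, hN⟩
      exact ⟨⟨h3, (Nat.le_of_dvd h0 hkm).trans hN⟩, ⟨h0, hN⟩, hkm⟩
  simp_rw [sum_mul, mul_comm _ (μ _ : ℤ)]
  rw [hswap, sum_filter, ← sum_neg_distrib]
  refine sum_congr rfl fun m hm => ?_
  rw [← sum_mul, sum_divisors_filter_three_le_moebius (mem_Ioc.1 hm).1.ne']
  split_ifs <;> simp

theorem sum_odd_ne_one_eq_sum_range (n : ℕ) (f : ℕ → M) :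
    ∑ m ∈ Ioc 0 (n + 3) with m ≠ 1 ∧ ¬ 2 ∣ m, f (n + 3 - m) =
      ∑ j ∈ range (n / 2 + 1), f (n - j * 2) := by
  refine sum_nbij' (fun m => (m - 3) / 2) (fun j => 2 * j + 3) ?_ ?_ ?_ ?_
    fun m hm => congrArg f (by simp only [mem_filter, mem_Ioc] at hm; omega) <;>
    intro _ _ <;> simp only [mem_filter, mem_Ioc, mem_range] at * <;> omega

theorem sum_S_three_mul_moebius (n : ℕ) :
    ∑ k ∈ Icc 3 (n + 3), (S 3 (n + 3) k : ℤ) * μ k = -pAtLeast 2 n := by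
  calc ∑ k ∈ Icc 3 (n + 3), (S 3 (n + 3) k : ℤ) * μ k
      = ∑ k ∈ Icc 3 (n + 3),
          (∑ m ∈ Ioc 0 (n + 3) with k ∣ m, (pAtLeast 3 (n + 3 - m) : ℤ)) * μ k := by
        refine sum_congr rfl fun k hk => ?_
        have hk3 := (mem_Icc.1 hk).1
        rw [S_eq_sum_range (by norm_num) hk3, ← sum_range_div_eq_sum_filter_dvd (by omega)]
        push_cast
        rfl
    _ = -∑ j ∈ range (n / 2 + 1), (pAtLeast 3 (n - j * 2) : ℤ) := by
        rw [sum_Icc_three_sum_filter_dvd_mul_moebius, sum_odd_ne_one_eq_sum_range n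
          fun m => (pAtLeast 3 m : ℤ)]
    _ = -pAtLeast 2 n := by
        rw [pAtLeast_eq_sum_range one_le_two n]
        push_cast
        rfl

theorem card_one_notMem_parts (n : ℕ) :
    Nat.card {P : Nat.Partition n // 1 ∉ P.parts} = pAtLeast 2 n := by
  rw [Nat.card_eq_fintype_card, Fintype.card_subtype, pAtLeast, restricted]
  congr 1
  refine filter_congr fun P _ => ⟨fun h i hi => ?_, fun h h1 => absurd (h 1 h1) (by norm_num)⟩
  have := P.parts_pos hi
  have : i ≠ 1 := ne_of_mem_of_not_mem hi h
  omega

theorem p_sub_pz_sub_one (n : ℕ) : (p n : ℤ) - pz ((n : ℤ) - 1) = pAtLeast 2 n := by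
  cases n with
  | zero =>
    rw [pz, if_neg (by norm_num), ← pAtLeast_one, ← pAtLeast_succ_of_lt zero_lt_one]
    simp
  | succ n =>
    rw [pz, if_pos (by omega), ← pAtLeast_one, pAtLeast_eq_pAtLeast_succ_add le_rfl (by omega),
      ← pAtLeast_one]
    simp

theorem no_one_parts_eq_neg_sum_S3_moebius (n : ℕ) :
    (Nat.card {P : Nat.Partition n // 1 ∉ P.parts} : ℤ) =
      -∑ k ∈ Finset.Icc 3 (n + 3),
          (S 3 (n + 3) k : ℤ) * ArithmeticFunction.moebius k ∧
    (p n : ℤ) - pz ((n : ℤ) - 1) =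
      -∑ k ∈ Finset.Icc 3 (n + 3),
          (S 3 (n + 3) k : ℤ) * ArithmeticFunction.moebius k := by
  rw [sum_S_three_mul_moebius, neg_neg, card_one_notMem_parts, p_sub_pz_sub_one]
  exact ⟨rfl, rfl⟩
end

section
/- For every integer n ≥ 6, the number of partitions of n with no parts equal to 1, at most one part equal to 2, and whose largest part occurs more than once equals ∇²[p](n) - ∇²[p](n-4) = (p(n) - 2p(n-1) + p(n-2)) - (p(n-4) - 2p(n-5) + p(n-6)). -/
open Finset

/-!
Write `D k` for the number of partitions of `k` with no part 1; deleting a part 1 gives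
`p (k + 1) = p k + D (k + 1)`. Raising the largest part by one maps the partitions of `k ≥ 1`
with no part 1 bijectively onto the partitions of `k + 1` with no part 1 whose largest part is
simple and at least 3, so the other partitions of `k + 1` with no part 1 number
`D (k + 1) - D k = ∇²[p](k + 1)`. For `k ≥ 3` these others are exactly the ones whose largest
part is repeated. Finally, adding two parts 2 to a partition with no part 1 produces a repeated
largest part iff the partition is one of these others (of any size `k`), so among the
partitions of `n` with no part 1 and a repeated largest part, those with at least two parts 2
number `∇²[p](n - 4)`.
-/

namespace Multiset

section LinearOrder

variable {α : Type*} [LinearOrder α] [OrderBot α]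

lemma sup_mem_of_ne_zero {s : Multiset α} (hs : s ≠ 0) : s.sup ∈ s := by
  obtain ⟨y, hy, hmax⟩ := s.exists_max_image id hs
  rwa [le_antisymm (sup_le.2 hmax) (le_sup hy)]

lemma exists_max_le_count_iff (s : Multiset α) {k : ℕ} (hk : 0 < k) :
    (∃ m ∈ s, (∀ i ∈ s, i ≤ m) ∧ k ≤ s.count m) ↔ k ≤ s.count s.sup := by
  refine ⟨fun ⟨m, hm, hmax, hc⟩ => ?_,
    fun h => ⟨s.sup, count_pos.1 (by omega), fun _ => le_sup, h⟩⟩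
  rwa [le_antisymm (sup_le.2 hmax) (le_sup hm)]

lemma sup_cons_erase_sup {s : Multiset α} {a : α} (h : ∀ b ∈ s.erase s.sup, b ≤ a) :
    (a ::ₘ s.erase s.sup).sup = a := by
  rw [sup_cons, sup_eq_left, sup_le]
  exact h

lemma lt_sup_of_mem_erase_sup {s : Multiset α} (hs : s.count s.sup = 1) {b : α}
    (hb : b ∈ s.erase s.sup) : b < s.sup := by
  refine lt_of_le_of_ne (le_sup (mem_of_mem_erase hb)) fun h => ?_
  rw [← count_pos, h, count_erase_self, hs] at hb
  exact hb.false

end LinearOrder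

def UniqueMaxGeThree (s : Multiset ℕ) : Prop := s.count s.sup = 1 ∧ 3 ≤ s.sup

lemma two_le_count_sup_add_replicate_iff (s : Multiset ℕ) :
    2 ≤ (s + replicate 2 2).count (s + replicate 2 2).sup ↔ ¬ s.UniqueMaxGeThree := by
  rw [sup_add, UniqueMaxGeThree]
  rcases le_or_gt s.sup 2 with hs | hs
  · rw [show s.sup ⊔ (replicate 2 2).sup = 2 by simp [hs], count_add, count_replicate_self]
    omega
  · have hmem : 1 ≤ s.count s.sup :=
      one_le_count_iff_mem.2 (sup_mem_of_ne_zero (by rintro rfl; simp at hs))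
    rw [show s.sup ⊔ (replicate 2 2).sup = s.sup by simp; omega, count_add,
      count_replicate, if_neg (by omega)]
    omega

lemma two_le_count_sup_iff {s : Multiset ℕ} (h2 : ∀ i ∈ s, 2 ≤ i) (hs : 3 ≤ s.sum) :
    2 ≤ s.count s.sup ↔ ¬ s.UniqueMaxGeThree := by
  have hmem : s.sup ∈ s := sup_mem_of_ne_zero (by rintro rfl; simp at hs)
  have hcount := one_le_count_iff_mem.2 hmem
  refine ⟨fun h ⟨h1, _⟩ => by omega, fun h => ?_⟩
  by_contra hc
  have h1 : s.count s.sup = 1 := by omega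
  have hsup : s.sup = 2 := by
    have := h2 _ hmem
    by_contra hne
    exact h ⟨h1, by omega⟩
  have herase : s.erase s.sup = 0 := eq_zero_of_forall_notMem fun b hb => by
    have := lt_sup_of_mem_erase_sup h1 hb
    have := h2 b (mem_of_mem_erase hb)
    omega
  have := sum_erase hmem
  rw [herase, sum_zero] at this
  omega

end Multiset

open Multiset

lemma Nat.card_subtype_add_card_subtype_not {α : Type*} [Finite α] (q : α → Prop) :
    Nat.card {x // q x} + Nat.card {x // ¬ q x} = Nat.card α := by
  classical
  rw [← Nat.card_sum, Nat.card_congr (Equiv.sumCompl q)]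

lemma Nat.card_subtype_and_add_card_subtype_and_not {α : Type*} [Finite α] (r q : α → Prop) :
    Nat.card {x // r x ∧ q x} + Nat.card {x // r x ∧ ¬ q x} = Nat.card {x // r x} := by
  rw [← Nat.card_subtype_add_card_subtype_not (α := {x // r x}) (q ·.1),
    Nat.card_congr (Equiv.subtypeSubtypeEquivSubtypeInter r q),
    Nat.card_congr (Equiv.subtypeSubtypeEquivSubtypeInter r (¬ q ·))]

namespace Nat.Partition

lemma two_le_of_mem_parts {n : ℕ} {P : n.Partition} (h1 : 1 ∉ P.parts) {i : ℕ}
    (hi : i ∈ P.parts) : 2 ≤ i := by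
  have := P.parts_pos hi
  have : i ≠ 1 := by rintro rfl; exact h1 hi
  omega

def addParts {n : ℕ} (Q : n.Partition) (t : Multiset ℕ) (ht : ∀ i ∈ t, 0 < i) :
    (n + t.sum).Partition where
  parts := Q.parts + t
  parts_pos hi := (mem_add.1 hi).elim Q.parts_pos (ht _)
  parts_sum := by rw [sum_add, Q.parts_sum]

def removeParts {n : ℕ} {t : Multiset ℕ} (P : (n + t.sum).Partition) (h : t ≤ P.parts) :
    n.Partition where
  parts := P.parts - t
  parts_pos hi := P.parts_pos (mem_of_le (Multiset.sub_le_self _ _) hi)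
  parts_sum := by
    have := congrArg sum (tsub_add_cancel_of_le h)
    rw [sum_add, P.parts_sum] at this
    omega

def addPartsEquiv (n : ℕ) (t : Multiset ℕ) (ht : ∀ i ∈ t, 0 < i) :
    n.Partition ≃ {P : (n + t.sum).Partition // t ≤ P.parts} where
  toFun Q := ⟨Q.addParts t ht, le_add_self⟩
  invFun P := removeParts P.1 P.2
  left_inv _ := Nat.Partition.ext (add_tsub_cancel_right _ _)
  right_inv P := Subtype.ext <| Nat.Partition.ext <| tsub_add_cancel_of_le P.2

lemma card_subtype_le_parts_and {n : ℕ} (t : Multiset ℕ) (ht : ∀ i ∈ t, 0 < i)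
    (q : Multiset ℕ → Prop) :
    Nat.card {P : (n + t.sum).Partition // t ≤ P.parts ∧ q P.parts} =
      Nat.card {Q : n.Partition // q (Q.parts + t)} :=
  Nat.card_congr <| (Equiv.subtypeSubtypeEquivSubtypeInter _ _).symm.trans <|
    ((addPartsEquiv n t ht).subtypeEquiv fun _ => Iff.rfl).symm

lemma parts_ne_zero {k : ℕ} (hk : k ≠ 0) (P : k.Partition) : P.parts ≠ 0 := by
  rintro h
  have := P.parts_sum
  simp_all

def raiseLargestPart {k : ℕ} (Q : k.Partition) : (k + 1).Partition where
  parts := (Q.parts.sup + 1) ::ₘ Q.parts.erase Q.parts.sup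
  parts_pos hi := (mem_cons.1 hi).elim (fun h => h ▸ Nat.succ_pos _)
    fun h => Q.parts_pos (mem_of_mem_erase h)
  parts_sum := by
    rcases eq_or_ne Q.parts 0 with h | h
    · have := Q.parts_sum
      simp_all
    · have := sum_erase (sup_mem_of_ne_zero h)
      rw [Q.parts_sum] at this
      rw [Multiset.sum_cons]
      omega

def lowerLargestPart {k : ℕ} (P : (k + 1).Partition) (h : 2 ≤ P.parts.sup) : k.Partition where
  parts := (P.parts.sup - 1) ::ₘ P.parts.erase P.parts.sup
  parts_pos hi := (mem_cons.1 hi).elim (fun h' => by omega)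
    fun h => P.parts_pos (mem_of_mem_erase h)
  parts_sum := by
    have := sum_erase (sup_mem_of_ne_zero (parts_ne_zero k.succ_ne_zero P))
    rw [P.parts_sum] at this
    rw [Multiset.sum_cons]
    omega

lemma sup_raiseLargestPart {k : ℕ} (Q : k.Partition) :
    (raiseLargestPart Q).parts.sup = Q.parts.sup + 1 :=
  sup_cons_erase_sup fun _ hb => (le_sup (mem_of_mem_erase hb)).trans (Nat.le_succ _)

lemma sup_lowerLargestPart {k : ℕ} (P : (k + 1).Partition) (h : 2 ≤ P.parts.sup)
    (hP : P.parts.count P.parts.sup = 1) : (lowerLargestPart P h).parts.sup = P.parts.sup - 1 :=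
  sup_cons_erase_sup fun _ hb => Nat.le_sub_one_of_lt (lt_sup_of_mem_erase_sup hP hb)

lemma one_notMem_raiseLargestPart {k : ℕ} (hk : k ≠ 0) {Q : k.Partition} (h1 : 1 ∉ Q.parts) :
    1 ∉ (raiseLargestPart Q).parts := by
  have hsup := two_le_of_mem_parts h1 (sup_mem_of_ne_zero (parts_ne_zero hk Q))
  intro h
  rcases mem_cons.1 h with h | h
  · omega
  · exact h1 (mem_of_mem_erase h)

lemma uniqueMaxGeThree_raiseLargestPart {k : ℕ} (hk : k ≠ 0) {Q : k.Partition}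
    (h1 : 1 ∉ Q.parts) : (raiseLargestPart Q).parts.UniqueMaxGeThree := by
  have hsup := two_le_of_mem_parts h1 (sup_mem_of_ne_zero (parts_ne_zero hk Q))
  have hnotMem : Q.parts.sup + 1 ∉ Q.parts.erase Q.parts.sup := fun h =>
    (le_sup (mem_of_mem_erase h)).not_gt (Nat.lt_succ_self _)
  refine ⟨?_, ?_⟩
  · rw [sup_raiseLargestPart, raiseLargestPart, count_cons_self, count_eq_zero.2 hnotMem]
  · rw [sup_raiseLargestPart]
    omega

lemma one_notMem_lowerLargestPart {k : ℕ} {P : (k + 1).Partition} (h1 : 1 ∉ P.parts)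
    (hP : P.parts.UniqueMaxGeThree) :
    1 ∉ (lowerLargestPart P (Nat.le_of_succ_le hP.2)).parts := by
  have := hP.2
  intro h
  rcases mem_cons.1 h with h | h
  · omega
  · exact h1 (mem_of_mem_erase h)

def raiseLargestPartEquiv {k : ℕ} (hk : k ≠ 0) :
    {Q : k.Partition // 1 ∉ Q.parts} ≃
      {P : (k + 1).Partition // 1 ∉ P.parts ∧ P.parts.UniqueMaxGeThree} where
  toFun Q := ⟨raiseLargestPart Q.1,
    one_notMem_raiseLargestPart hk Q.2, uniqueMaxGeThree_raiseLargestPart hk Q.2⟩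
  invFun P := ⟨lowerLargestPart P.1 _, one_notMem_lowerLargestPart P.2.1 P.2.2⟩
  left_inv Q := by
    apply Subtype.ext
    ext1
    simp only [lowerLargestPart, sup_raiseLargestPart]
    simp only [raiseLargestPart, erase_cons_head, Nat.add_sub_cancel]
    exact cons_erase (sup_mem_of_ne_zero (parts_ne_zero hk Q.1))
  right_inv P := by
    apply Subtype.ext
    ext1
    simp only [raiseLargestPart, sup_lowerLargestPart _ _ P.2.2.1]
    simp only [lowerLargestPart, erase_cons_head,
      Nat.sub_add_cancel (Nat.one_le_of_lt P.2.2.2)]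
    exact cons_erase (sup_mem_of_ne_zero (parts_ne_zero k.succ_ne_zero P.1))

end Nat.Partition

open Nat.Partition

noncomputable def pNoOnes (k : ℕ) : ℕ := Nat.card {P : k.Partition // 1 ∉ P.parts}

noncomputable def pNoOnesMaxRepeated (k : ℕ) : ℕ :=
  Nat.card {P : k.Partition // 1 ∉ P.parts ∧ 2 ≤ P.parts.count P.parts.sup}

noncomputable def pNoOnesNotUniqueMaxGeThree (k : ℕ) : ℕ :=
  Nat.card {P : k.Partition // 1 ∉ P.parts ∧ ¬ P.parts.UniqueMaxGeThree}

lemma p_succ (k : ℕ) : p (k + 1) = p k + pNoOnes (k + 1) := by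
  have h := Nat.card_congr (addPartsEquiv k {1} (by simp))
  simp only [singleton_le] at h
  rw [p, p, pNoOnes, ← Nat.card_eq_fintype_card, ← Nat.card_eq_fintype_card, h]
  exact (Nat.card_subtype_add_card_subtype_not _).symm

lemma pNoOnes_succ {k : ℕ} (hk : k ≠ 0) :
    pNoOnes (k + 1) = pNoOnes k + pNoOnesNotUniqueMaxGeThree (k + 1) := by
  rw [pNoOnes, pNoOnes, pNoOnesNotUniqueMaxGeThree, Nat.card_congr (raiseLargestPartEquiv hk),
    Nat.card_subtype_and_add_card_subtype_and_not]

lemma cast_pNoOnesNotUniqueMaxGeThree {k : ℕ} (hk : 2 ≤ k) :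
    (pNoOnesNotUniqueMaxGeThree k : ℤ) = p k - 2 * p (k - 1) + p (k - 2) := by
  obtain ⟨j, rfl⟩ : ∃ j, k = j + 2 := ⟨k - 2, by omega⟩
  have h₁ : pNoOnes (j + 2) = pNoOnes (j + 1) + pNoOnesNotUniqueMaxGeThree (j + 2) :=
    pNoOnes_succ j.succ_ne_zero
  have h₂ : p (j + 2) = p (j + 1) + pNoOnes (j + 2) := p_succ (j + 1)
  have h₃ := p_succ j
  simp only [Nat.add_sub_cancel, show j + 2 - 1 = j + 1 by omega]
  omega

lemma pNoOnesMaxRepeated_eq {k : ℕ} (hk : 3 ≤ k) :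
    pNoOnesMaxRepeated k = pNoOnesNotUniqueMaxGeThree k :=
  Nat.card_congr <| Equiv.subtypeEquivRight fun P => and_congr_right fun h1 =>
    two_le_count_sup_iff (fun _ => two_le_of_mem_parts h1) (P.parts_sum.symm ▸ hk)

lemma card_two_le_count_two_maxRepeated (m : ℕ) :
    Nat.card {P : (m + 4).Partition //
        2 ≤ P.parts.count 2 ∧ 1 ∉ P.parts ∧ 2 ≤ P.parts.count P.parts.sup} =
      pNoOnesNotUniqueMaxGeThree m := by
  have h := card_subtype_le_parts_and (n := m) (replicate 2 2) (by simp)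
    (fun s => 1 ∉ s ∧ 2 ≤ s.count s.sup)
  rw [show (replicate 2 2).sum = 4 by simp] at h
  rw [pNoOnesNotUniqueMaxGeThree]
  simpa only [← le_count_iff_replicate_le, mem_add, mem_replicate, OfNat.one_ne_ofNat,
    and_false, or_false, two_le_count_sup_add_replicate_iff] using h

lemma cast_card_count_two_le_one_maxRepeated {n : ℕ} (hn : 4 ≤ n) :
    (Nat.card {P : n.Partition //
        1 ∉ P.parts ∧ P.parts.count 2 ≤ 1 ∧ 2 ≤ P.parts.count P.parts.sup} : ℤ) =
      pNoOnesMaxRepeated n - pNoOnesNotUniqueMaxGeThree (n - 4) := by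
  obtain ⟨m, rfl⟩ : ∃ m, n = m + 4 := ⟨n - 4, by omega⟩
  rw [Nat.add_sub_cancel, eq_sub_iff_add_eq, ← card_two_le_count_two_maxRepeated]
  norm_cast
  rw [pNoOnesMaxRepeated, ← Nat.card_subtype_and_add_card_subtype_and_not
    (fun P : (m + 4).Partition => 1 ∉ P.parts ∧ 2 ≤ P.parts.count P.parts.sup)
    (fun P => P.parts.count 2 ≤ 1)]
  congr 1 <;> refine Nat.card_congr (Equiv.subtypeEquivRight fun P => ?_)
  · tauto
  · rw [not_le, Nat.lt_iff_add_one_le]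
    tauto

theorem card_no_ones_at_most_one_two_max_repeated (n : ℕ) (hn : 6 ≤ n) :
    (Nat.card {P : Nat.Partition n //
        1 ∉ P.parts ∧ P.parts.count 2 ≤ 1 ∧
        ∃ m ∈ P.parts, (∀ i ∈ P.parts, i ≤ m) ∧ 2 ≤ P.parts.count m} : ℤ) =
      ((p n : ℤ) - 2 * (p (n - 1) : ℤ) + (p (n - 2) : ℤ)) -
        ((p (n - 4) : ℤ) - 2 * (p (n - 5) : ℤ) + (p (n - 6) : ℤ)) := by
  simp only [exists_max_le_count_iff _ two_pos]
  rw [cast_card_count_two_le_one_maxRepeated (by omega), pNoOnesMaxRepeated_eq (by omega),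
    cast_pNoOnesNotUniqueMaxGeThree (by omega), cast_pNoOnesNotUniqueMaxGeThree (by omega),
    Nat.sub_sub, Nat.sub_sub]
end

section
/- For every integer n ≥ 0, ∑_{k=1}^{n+1} S^{(1)}_{n+1,k} · φ(k) equals the sum of parts, counted without multiplicity, over all partitions of n+1 (i.e., the sum over all partitions λ of n+1 of the sum of the distinct part sizes occurring in λ). -/
/-!
Write `c m` for the number of partitions of `N` having `m` as a part. A partition has at least
`j` parts equal to `k` iff it contains the multiset `{k, …, k}` (`j` times); removing that
multiset, or removing a single part `j * k`, are both bijections onto the partitions of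
`N - j * k`. Hence the total number of parts equal to `k` is `∑_{j ≥ 1} c (j * k)`, and the
left-hand side becomes `∑_m c m ∑_{k ∣ m} φ k = ∑_m m * c m`, which is the sum of the distinct
parts.
-/

open Finset

theorem Nat.sum_Icc_sum_Icc_div_eq_sum_Icc_sum_divisors {M : Type*} [AddCommMonoid M]
    (n : ℕ) (F : ℕ → ℕ → M) :
    ∑ k ∈ Icc 1 n, ∑ j ∈ Icc 1 (n / k), F k (j * k) =
      ∑ m ∈ Icc 1 n, ∑ k ∈ m.divisors, F k m := by
  symm
  rw [sum_comm' (t' := Icc 1 n) (s' := fun k => {m ∈ Icc 1 n | k ∣ m})]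
  · refine sum_congr rfl fun k hk => ?_
    have hk : 0 < k := (mem_Icc.1 hk).1
    refine Eq.symm <| sum_nbij' (· * k) (· / k) ?_ ?_ ?_ ?_ (fun _ _ => rfl)
    · intro j hj
      simp only [mem_Icc, mem_filter] at hj ⊢
      exact ⟨⟨Nat.mul_pos hj.1 hk, (Nat.le_div_iff_mul_le hk).1 hj.2⟩,
        dvd_mul_left k j⟩
    · intro m hm
      simp only [mem_Icc, mem_filter] at hm ⊢
      exact ⟨(Nat.one_le_div_iff hk).2 (Nat.le_of_dvd (by omega) hm.2),
        Nat.div_le_div_right hm.1.2⟩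
    · intro j _
      exact Nat.mul_div_cancel j hk
    · intro m hm
      exact Nat.div_mul_cancel (mem_filter.1 hm).2
  · intro m k
    simp only [mem_Icc, Nat.mem_divisors, mem_filter]
    constructor
    · rintro ⟨hm, hkm, -⟩
      exact ⟨⟨hm, hkm⟩, Nat.pos_of_dvd_of_pos hkm (by omega),
        (Nat.le_of_dvd (by omega) hkm).trans hm.2⟩
    · rintro ⟨⟨hm, hkm⟩, -⟩
      exact ⟨hm, hkm, by omega⟩

namespace Nat.Partition

variable {n : ℕ}

theorem sum_le_of_le_parts {s : Multiset ℕ} {P : n.Partition} (h : s ≤ P.parts) :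
    s.sum ≤ n := by
  obtain ⟨u, hu⟩ := Multiset.le_iff_exists_add.1 h
  rw [← P.parts_sum, hu, Multiset.sum_add]
  exact Nat.le_add_right _ _

def subPartsEquiv (s : Multiset ℕ) (hs : ∀ i ∈ s, 0 < i) (h : s.sum ≤ n) :
    {P : n.Partition // s ≤ P.parts} ≃ (n - s.sum).Partition where
  toFun P := ⟨P.1.parts - s,
    fun hi => P.1.parts_pos (Multiset.mem_of_le (Multiset.sub_le_self _ _) hi), by
      rw [eq_tsub_iff_add_eq_of_le h, ← Multiset.sum_add, tsub_add_cancel_of_le P.2,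
        P.1.parts_sum]⟩
  invFun Q := ⟨⟨Q.parts + s, fun hi => (Multiset.mem_add.1 hi).elim Q.parts_pos (hs _),
    by rw [Multiset.sum_add, Q.parts_sum, Nat.sub_add_cancel h]⟩, Multiset.le_add_left _ _⟩
  left_inv P := Subtype.ext <| Nat.Partition.ext <| tsub_add_cancel_of_le P.2
  right_inv Q := Nat.Partition.ext <| add_tsub_cancel_right _ _

theorem card_le_parts_eq_of_sum_eq {s t : Multiset ℕ} (hs : ∀ i ∈ s, 0 < i)
    (ht : ∀ i ∈ t, 0 < i) (hst : s.sum = t.sum) :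
    #{P : n.Partition | s ≤ P.parts} = #{P : n.Partition | t ≤ P.parts} := by
  rw [← Fintype.card_subtype, ← Fintype.card_subtype]
  by_cases h : s.sum ≤ n
  · rw [Fintype.card_congr (subPartsEquiv s hs h),
      Fintype.card_congr (subPartsEquiv t ht (hst ▸ h)), hst]
  · have : IsEmpty {P : n.Partition // s ≤ P.parts} := ⟨fun P => h (sum_le_of_le_parts P.2)⟩
    have : IsEmpty {P : n.Partition // t ≤ P.parts} :=
      ⟨fun P => h (hst ▸ sum_le_of_le_parts P.2)⟩
    rw [Fintype.card_eq_zero, Fintype.card_eq_zero]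

theorem card_le_count_eq_card_mem {j k : ℕ} (hj : 0 < j) (hk : 0 < k) :
    #{P : n.Partition | j ≤ P.parts.count k} = #{P : n.Partition | j * k ∈ P.parts} := by
  simp_rw [Multiset.le_count_iff_replicate_le, ← Multiset.singleton_le]
  refine card_le_parts_eq_of_sum_eq (fun i hi => Multiset.eq_of_mem_replicate hi ▸ hk) ?_ ?_
  · exact fun i hi => Multiset.mem_singleton.1 hi ▸ Nat.mul_pos hj hk
  · simp

theorem count_le_div (P : n.Partition) (k : ℕ) : P.parts.count k ≤ n / k := by
  rcases Nat.eq_zero_or_pos k with rfl | hk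
  · rw [Nat.div_zero, Nat.le_zero, Multiset.count_eq_zero]
    exact fun h => (P.parts_pos h).false
  · rw [Nat.le_div_iff_mul_le hk]
    simpa using sum_le_of_le_parts (Multiset.le_count_iff_replicate_le.1 le_rfl)

theorem sum_count_eq_sum_card_mem {k : ℕ} (hk : 0 < k) :
    ∑ P : n.Partition, P.parts.count k =
      ∑ j ∈ Icc 1 (n / k), #{P : n.Partition | j * k ∈ P.parts} := by
  calc ∑ P : n.Partition, P.parts.count k
      = ∑ P : n.Partition, ∑ _j ∈ Icc 1 (P.parts.count k), 1 := by simp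
    _ = ∑ j ∈ Icc 1 (n / k), ∑ _P ∈ {P : n.Partition | j ≤ P.parts.count k}, 1 :=
        sum_comm' fun P j => by
          have := count_le_div P k
          simp only [mem_univ, mem_Icc, mem_filter, true_and]
          omega
    _ = _ := sum_congr rfl fun j hj => by
        rw [← card_eq_sum_ones, card_le_count_eq_card_mem (mem_Icc.1 hj).1 hk]

theorem sum_sum_toFinset_parts_eq :
    ∑ P : n.Partition, ∑ i ∈ P.parts.toFinset, i =
      ∑ m ∈ Icc 1 n, m * #{P : n.Partition | m ∈ P.parts} := by
  rw [sum_comm' (t' := Icc 1 n) (s' := fun m => {P : n.Partition | m ∈ P.parts})]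
  · simp only [sum_const, smul_eq_mul, mul_comm]
  · intro P m
    simp only [mem_univ, Multiset.mem_toFinset, true_and, mem_filter, mem_Icc]
    exact ⟨fun h => ⟨h, P.parts_pos h, le_of_mem_parts h⟩, fun h => h.1⟩

end Nat.Partition

theorem S_one_eq_sum_count (n k : ℕ) : S 1 n k = ∑ P : n.Partition, P.parts.count k :=
  sum_congr rfl fun P _ => if_pos fun _ hi => P.parts_pos hi

theorem sum_S1_totient_eq_sum_distinct_parts (n : ℕ) :
    ∑ k ∈ Finset.Icc 1 (n + 1), S 1 (n + 1) k * Nat.totient k =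
      ∑ P : Nat.Partition (n + 1), ∑ i ∈ P.parts.toFinset, i := by
  calc ∑ k ∈ Icc 1 (n + 1), S 1 (n + 1) k * k.totient
      = ∑ k ∈ Icc 1 (n + 1), ∑ j ∈ Icc 1 ((n + 1) / k),
          k.totient * #{P : (n + 1).Partition | j * k ∈ P.parts} := by
        refine sum_congr rfl fun k hk => ?_
        rw [S_one_eq_sum_count, Nat.Partition.sum_count_eq_sum_card_mem (mem_Icc.1 hk).1,
          sum_mul]
        simp only [mul_comm]
    _ = ∑ m ∈ Icc 1 (n + 1), ∑ k ∈ m.divisors,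
          k.totient * #{P : (n + 1).Partition | m ∈ P.parts} :=
        Nat.sum_Icc_sum_Icc_div_eq_sum_Icc_sum_divisors (n + 1)
          fun k m => k.totient * #{P : (n + 1).Partition | m ∈ P.parts}
    _ = ∑ m ∈ Icc 1 (n + 1), m * #{P : (n + 1).Partition | m ∈ P.parts} := by
        simp only [← sum_mul, Nat.sum_totient]
    _ = _ := Nat.Partition.sum_sum_toFinset_parts_eq.symm
end

section
/- For every integer n ≥ 0, ∑_{k=2}^{n+2} S^{(2)}_{n+2,k} · φ(k) = S^{(1)}_{n+1,1}, i.e., this sum equals the total number of parts equal to 1 in all partitions of n+1. -/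
/-!
Deleting one part `k` from a partition of `n` with all parts `≥ r` (where `r ≤ k`) gives
`S r n k = ∑_{m ≥ 1, k ∣ m} P_r(n - m)`, where `P_r(s) = numPartitionsGE r s` counts the
partitions of `s` with all parts `≥ r`. For `r = 2`, summing against `φ` and using
`∑_{d ∣ m, d ≥ 2} φ d = m - 1` turns the left side into `∑_{s ≤ n + 1} P_2(s) (n + 1 - s)`.
For `r = k = 1` the same formula gives `∑_{t ≤ n} P_1(t)`, and deleting the parts `1` shows
`P_1(t) = ∑_{s ≤ t} P_2(s)`; exchanging the order of summation identifies the two sides.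
-/

open Finset

namespace Nat.Partition

theorem sum_eq_sum_notMem_add_sum_partitionWithPartEquiv_symm {M : Type*} [AddCommMonoid M]
    {n a : ℕ} (ha1 : 1 ≤ a) (ha : a ≤ n) (f : n.Partition → M) :
    ∑ P, f P = ∑ P with a ∉ P.parts, f P +
      ∑ Q : (n - a).Partition, f ((partitionWithPartEquiv ha1 ha).symm Q) := by
  rw [← sum_filter_not_add_sum_filter univ (a ∈ ·.parts),
    Equiv.sum_comp (partitionWithPartEquiv ha1 ha).symm (fun P => f P.1)]
  exact congrArg _ (sum_subtype _ (by simp) f)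

end Nat.Partition

open Nat.Partition
open scoped Nat

def numPartitionsGE (r n : ℕ) : ℕ := #(restricted n (r ≤ ·))

theorem numPartitionsGE_eq_sum (r n : ℕ) :
    numPartitionsGE r n = ∑ P : n.Partition, if ∀ i ∈ P.parts, r ≤ i then 1 else 0 :=
  card_filter _ _

theorem numPartitionsGE_zero (r : ℕ) : numPartitionsGE r 0 = 1 := by
  simp [numPartitionsGE_eq_sum]

theorem numPartitionsGE_eq_add {r n : ℕ} (hr : 0 < r) (hrn : r ≤ n) :
    numPartitionsGE r n = numPartitionsGE (r + 1) n + numPartitionsGE r (n - r) := by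
  simp only [numPartitionsGE_eq_sum]
  rw [sum_eq_sum_notMem_add_sum_partitionWithPartEquiv_symm hr hrn, sum_filter]
  congr 1
  · refine sum_congr rfl fun P _ => ?_
    rw [← ite_and]
    exact if_congr (by grind) rfl rfl
  · simp

theorem numPartitionsGE_one_eq_sum_range (n : ℕ) :
    numPartitionsGE 1 n = ∑ s ∈ range (n + 1), numPartitionsGE 2 s := by
  induction n with
  | zero => simp [numPartitionsGE_zero]
  | succ n ih =>
    rw [numPartitionsGE_eq_add one_pos (by omega), Nat.add_sub_cancel, ih, sum_range_succ _ (n + 1),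
      add_comm]

theorem S_eq_add {r n k : ℕ} (hk : 0 < k) (hrk : r ≤ k) (hkn : k ≤ n) :
    S r n k = numPartitionsGE r (n - k) + S r (n - k) k := by
  rw [S, sum_eq_sum_notMem_add_sum_partitionWithPartEquiv_symm hk hkn, numPartitionsGE_eq_sum, S,
    ← sum_add_distrib, sum_eq_zero fun P hP => by
      simp [Multiset.count_eq_zero_of_notMem (mem_filter.1 hP).2], zero_add]
  refine sum_congr rfl fun Q _ => ?_
  simp only [partitionWithPartEquiv_symm_apply_parts, Multiset.forall_mem_cons, hrk, true_and,
    Multiset.count_cons_self]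
  split_ifs <;> omega

theorem S_eq_zero_of_lt {r n k : ℕ} (h : n < k) : S r n k = 0 :=
  sum_eq_zero fun P _ => by
    simp [Multiset.count_eq_zero_of_notMem fun hk => (le_of_mem_parts hk).not_gt h]

theorem S_eq_sum_range_s16 {r k : ℕ} (hk : 0 < k) (hrk : r ≤ k) (n : ℕ) :
    S r n k = ∑ s ∈ range n, if k ∣ n - s then numPartitionsGE r s else 0 := by
  induction n using Nat.strong_induction_on with
  | _ n ih =>
  rcases lt_or_ge n k with hnk | hkn
  · rw [S_eq_zero_of_lt hnk, eq_comm]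
    exact sum_eq_zero fun s hs =>
      if_neg (Nat.not_dvd_of_pos_of_lt (by grind) (by omega))
  obtain ⟨m, rfl⟩ := Nat.exists_eq_add_of_le' hkn
  have hlast : ∑ x ∈ range k, (if k ∣ m + k - (m + x) then numPartitionsGE r (m + x) else 0) =
      numPartitionsGE r m := by
    refine (sum_eq_single 0 (fun x hx hx0 => if_neg ?_) (by simp [hk])).trans (by simp)
    exact Nat.not_dvd_of_pos_of_lt (by grind) (by grind)
  rw [S_eq_add hk hrk hkn, Nat.add_sub_cancel, ih m (by omega), sum_range_add, hlast, add_comm]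
  congr 1
  refine sum_congr rfl fun s hs => ?_
  simp only [show m + k - s = m - s + k by grind, Nat.dvd_add_self_right]

theorem sum_Icc_two_ite_dvd_totient {m N : ℕ} (hm : 0 < m) (hmN : m ≤ N) :
    ∑ k ∈ Icc 2 N, (if k ∣ m then φ k else 0) = m - 1 := by
  have hdivisors : {k ∈ Icc 2 N | k ∣ m} = m.divisors.erase 1 := by
    ext k
    simp only [mem_filter, mem_Icc, mem_erase, Nat.mem_divisors]
    have hle : k ∣ m → k ≤ m := Nat.le_of_dvd hm
    have hpos : k ∣ m → 0 < k := (Nat.pos_of_dvd_of_pos · hm)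
    grind
  have hsplit := add_sum_erase m.divisors φ (Nat.one_mem_divisors.2 hm.ne')
  rw [Nat.sum_totient, Nat.totient_one] at hsplit
  rw [← sum_filter, hdivisors]
  omega

theorem sum_range_mul_sub_eq_sum_range_sum_range (a : ℕ → ℕ) (N : ℕ) :
    ∑ s ∈ range (N + 1), a s * (N - s) = ∑ t ∈ range N, ∑ s ∈ range (t + 1), a s := by
  induction N with
  | zero => simp
  | succ N ih =>
    have hsplit : ∀ s ∈ range (N + 1), a s * (N + 1 - s) = a s * (N - s) + a s := fun s hs => by
      rw [Nat.sub_add_comm (mem_range_succ_iff.1 hs), Nat.mul_succ]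
    rw [sum_range_succ _ (N + 1), Nat.sub_self, mul_zero, add_zero, sum_congr rfl hsplit,
      sum_add_distrib, ih, sum_range_succ (fun t => ∑ s ∈ range (t + 1), a s) N]

theorem sum_S2_totient_eq_number_of_ones (n : ℕ) :
    ∑ k ∈ Finset.Icc 2 (n + 2), S 2 (n + 2) k * Nat.totient k =
      S 1 (n + 1) 1 := by
  calc ∑ k ∈ Icc 2 (n + 2), S 2 (n + 2) k * φ k
      = ∑ k ∈ Icc 2 (n + 2), ∑ s ∈ range (n + 2),
          numPartitionsGE 2 s * if k ∣ n + 2 - s then φ k else 0 :=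
        sum_congr rfl fun k hk => by
          rw [S_eq_sum_range_s16 (by grind) (mem_Icc.1 hk).1, sum_mul]
          exact sum_congr rfl fun s _ => by
            rw [ite_mul, mul_ite, zero_mul, mul_zero, mul_comm (numPartitionsGE 2 s)]
    _ = ∑ s ∈ range (n + 2),
          numPartitionsGE 2 s * ∑ k ∈ Icc 2 (n + 2), if k ∣ n + 2 - s then φ k else 0 := by
        rw [sum_comm]
        simp only [mul_sum]
    _ = ∑ s ∈ range (n + 2), numPartitionsGE 2 s * (n + 1 - s) :=
        sum_congr rfl fun s hs => by
          rw [sum_Icc_two_ite_dvd_totient] <;> grind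
    _ = ∑ t ∈ range (n + 1), numPartitionsGE 1 t := by
        simp only [sum_range_mul_sub_eq_sum_range_sum_range, numPartitionsGE_one_eq_sum_range]
    _ = S 1 (n + 1) 1 := by
        simp [S_eq_sum_range_s16 one_pos le_rfl]
end

section
/- Let α be a prime number. For every integer m ≥ 1, ∑_{d ∣ m} μ(α·d) = -1 if m is a power of α (i.e., m = α^j for some j ≥ 0), and ∑_{d ∣ m} μ(α·d) = 0 otherwise. -/
/-!
Write `m = α ^ k * n` with `α ∤ n`. A divisor `d` of `m` divisible by `α` contributes `μ (α * d) = 0`,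
since `α * d` is not squarefree; the remaining divisors are exactly the divisors of `n`, and for them
`μ (α * d) = -μ d` by multiplicativity. Hence the sum is `-∑ d ∣ n, μ d`, which is `-1` if `n = 1` and
`0` otherwise.
-/

open Finset
open scoped ArithmeticFunction.Moebius

namespace Nat

theorem ordCompl_eq_one_iff {p m : ℕ} (hp : p.Prime) : ordCompl[p] m = 1 ↔ ∃ j, m = p ^ j := by
  constructor
  · intro h
    exact ⟨m.factorization p, by simpa [h] using (ordProj_mul_ordCompl_eq_self m p).symm⟩
  · rintro ⟨j, rfl⟩
    exact ordCompl_self_pow hp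

end Nat

namespace ArithmeticFunction

theorem sum_divisors_moebius_s17 (n : ℕ) : ∑ d ∈ n.divisors, μ d = if n = 1 then 1 else 0 := by
  rw [← coe_mul_zeta_apply, moebius_mul_coe_zeta, one_apply]

theorem moebius_prime_mul_of_dvd {p d : ℕ} (hp : p.Prime) (hpd : p ∣ d) : μ (p * d) = 0 := by
  refine moebius_eq_zero_of_not_squarefree fun hsq => hp.not_isUnit (hsq p ?_)
  exact mul_dvd_mul_left p hpd

theorem moebius_prime_mul_of_not_dvd {p d : ℕ} (hp : p.Prime) (hpd : ¬p ∣ d) :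
    μ (p * d) = -μ d := by
  rw [isMultiplicative_moebius.map_mul_of_coprime ((hp.coprime_iff_not_dvd).mpr hpd),
    moebius_apply_prime hp, neg_one_mul]

theorem sum_divisors_moebius_prime_mul_eq {p : ℕ} (hp : p.Prime) (m : ℕ) :
    ∑ d ∈ m.divisors, μ (p * d) = -∑ d ∈ (ordCompl[p] m).divisors, μ d := by
  rcases eq_or_ne m 0 with rfl | hm
  · simp
  have hsub : (ordCompl[p] m).divisors ⊆ m.divisors :=
    Nat.divisors_subset_of_dvd hm (Nat.ordCompl_dvd m p)
  rw [← sum_subset hsub, ← sum_neg_distrib]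
  · refine sum_congr rfl fun d hd => moebius_prime_mul_of_not_dvd hp fun hpd => ?_
    exact Nat.not_dvd_ordCompl hp hm (hpd.trans (Nat.dvd_of_mem_divisors hd))
  · intro d hd hdn
    refine moebius_prime_mul_of_dvd hp (not_not.mp fun hpd => hdn ?_)
    exact Nat.mem_divisors.mpr
      ⟨Nat.dvd_ordCompl_of_dvd_not_dvd (Nat.dvd_of_mem_divisors hd) hpd, (Nat.ordCompl_pos p hm).ne'⟩

end ArithmeticFunction

theorem sum_divisors_moebius_prime_mul_general (α : ℕ) (hα : α.Prime) (m : ℕ) :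
    ((∃ j : ℕ, m = α ^ j) →
      ∑ d ∈ m.divisors, ArithmeticFunction.moebius (α * d) = -1) ∧
    (¬ (∃ j : ℕ, m = α ^ j) →
      ∑ d ∈ m.divisors, ArithmeticFunction.moebius (α * d) = 0) := by
  rw [ArithmeticFunction.sum_divisors_moebius_prime_mul_eq hα,
    ArithmeticFunction.sum_divisors_moebius_s17, ← Nat.ordCompl_eq_one_iff hα]
  constructor
  · intro h
    rw [if_pos h]
  · intro h
    rw [if_neg h, neg_zero]

theorem sum_divisors_moebius_prime_mul (α : ℕ) (hα : α.Prime) (m : ℕ) (hm : 1 ≤ m) :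
    ((∃ j : ℕ, m = α ^ j) →
      ∑ d ∈ m.divisors, ArithmeticFunction.moebius (α * d) = -1) ∧
    (¬ (∃ j : ℕ, m = α ^ j) →
      ∑ d ∈ m.divisors, ArithmeticFunction.moebius (α * d) = 0) :=
  sum_divisors_moebius_prime_mul_general α hα m
end
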